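/- Let p be an odd prime and let γ be a self-conjugate p-core, with sorted lowest-bead positions ρ_0 < ρ_1 < ⋯ < ρ_{p−1} of its abacus as defined. Then for every 0 ≤ i ≤ p−1, (ρ_i mod p) + (ρ_{p−1−i} mod p) = p − 1. -/

import Mathlib

/-!
For a self-conjugate partition, the `N`-bead beta-set `B` and its mirror image under
`x ↦ 2N - 1 - x` partition `{0, …, 2N - 1}`. For a self-conjugate `p`-core every runner of
the `p`-abacus is an initial segment, so if `m` is the last bead on its runner then `m + p`
is a gap, hence `2N - 1 - p - m` is a bead, and it is the last bead on its runner. The map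
`m ↦ 2N - 1 - p - m` thus reverses `ρ_0 < ⋯ < ρ_{p-1}`, so
`ρ_i + ρ_{p-1-i} = 2N - 1 - p ≡ -1 (mod p)` because `p ∣ N`.
-/


namespace ArxivW2

/-- A partition of a natural number, given by its (weakly decreasing, finitely
supported) sequence of parts, `part i` being the `(i+1)`-st part. -/
structure PartitionNat : Type where
  part : ℕ → ℕ
  antitone : Antitone part
  finite_support : (Function.support part).Finite

namespace PartitionNat

/-- The rank `|λ|` of a partition: the sum of its parts. -/
noncomputable def size (μ : PartitionNat) : ℕ := ∑ᶠ i, μ.part i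

/-- The number of nonzero parts of a partition. -/
noncomputable def len (μ : PartitionNat) : ℕ := (Function.support μ.part).ncard

/-- The `(j+1)`-st part of the conjugate partition: `λ'_{j+1} = #{i : λ_i ≥ j+1}`. -/
noncomputable def conj (μ : PartitionNat) (j : ℕ) : ℕ := {i : ℕ | j + 1 ≤ μ.part i}.ncard

/-- A partition is self-conjugate if it equals its conjugate. -/
def SelfConj (μ : PartitionNat) : Prop := ∀ j, μ.part j = μ.conj j

/-- `(i, j)` (0-indexed) is a node of the Young diagram of `μ`. -/
def IsNode (μ : PartitionNat) (i j : ℕ) : Prop := j < μ.part i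

/-- The hook length of the (0-indexed) node `(i,j)`:
`h = λ_{i+1} + λ'_{j+1} − (i+1) − (j+1) + 1`. -/
noncomputable def hook (μ : PartitionNat) (i j : ℕ) : ℕ := μ.part i + μ.conj j - (i + j + 1)

/-- A partition is a `p`-core if no hook length of a node is divisible by `p`. -/
def IsCore (p : ℕ) (μ : PartitionNat) : Prop := ∀ i j, μ.IsNode i j → ¬ p ∣ μ.hook i j

/-- The `p`-weight of a partition: the number of nodes whose hook length is
divisible by `p`. -/
noncomputable def pweight (p : ℕ) (μ : PartitionNat) : ℕ :=
  {x : ℕ × ℕ | μ.IsNode x.1 x.2 ∧ p ∣ μ.hook x.1 x.2}.ncard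

/-- The `N`-bead beta-set `B_N(λ) = {λ_i + N − i : 1 ≤ i ≤ N}` of a partition
(meaningful when `N ≥ len λ`). -/
def betaSet (N : ℕ) (μ : PartitionNat) : Finset ℕ :=
  (Finset.range N).image fun i => μ.part i + (N - 1 - i)

/-- A partition is `p`-regular if no nonzero part is repeated `p` or more times. -/
def Regular (p : ℕ) (μ : PartitionNat) : Prop :=
  ∀ i, μ.part i ≠ 0 → μ.part (i + p - 1) < μ.part i

end PartitionNat

open PartitionNat

/-- `γ` is the `p`-core of `lam`: `γ` is a `p`-core, and for some `N` at least the
number of parts of both, the `N`-bead beta-sets of `lam` and `γ` have the same number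
of elements in each residue class mod `p`. -/
def HasCore (p : ℕ) (lam gam : PartitionNat) : Prop :=
  IsCore p gam ∧ ∃ N : ℕ, lam.len ≤ N ∧ gam.len ≤ N ∧ ∀ r : ℕ,
    ((betaSet N lam).filter fun b => b % p = r).card =
      ((betaSet N gam).filter fun b => b % p = r).card

/-- Membership in the `p`-block of weight `w` with `p`-core `gam`. -/
def InBlock (p w : ℕ) (gam lam : PartitionNat) : Prop :=
  lam.size = gam.size + w * p ∧ HasCore p lam gam

/-- The dominance order: `lam ⊴ mu`. -/
def Dom (lam mu : PartitionNat) : Prop :=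
  ∀ k : ℕ, ∑ i ∈ Finset.range k, lam.part i ≤ ∑ i ∈ Finset.range k, mu.part i

/-- `mu` is obtained from `lam` by removing a `p`-rim-hook of leg length `l`. -/
def RemoveHook (p : ℕ) (lam mu : PartitionNat) (l : ℕ) : Prop :=
  ∃ N b : ℕ, lam.len ≤ N ∧ mu.len ≤ N ∧ b ∈ betaSet N lam ∧ p ≤ b ∧
    b - p ∉ betaSet N lam ∧
    betaSet N mu = insert (b - p) (betaSet N lam \ {b}) ∧
    l = ((betaSet N lam).filter fun x => b - p < x ∧ x < b).card

/-- `lam` belongs to the set `∂_l` of the weight-2 block of `gam`: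
it lies in the block and some (equivalently, every) two-step `p`-rim-hook removal
sequence from `lam` down to `gam` has leg lengths `l₁, l₂` with `|l₁ − l₂| = l`. -/
def DelClass (p : ℕ) (gam : PartitionNat) (l : ℕ) (lam : PartitionNat) : Prop :=
  InBlock p 2 gam lam ∧ ∃ mu l1 l2, RemoveHook p lam mu l1 ∧ RemoveHook p mu gam l2 ∧
    max l1 l2 - min l1 l2 = l

/-- `ρ 0 < ρ 1 < ⋯ < ρ (p−1)` is the increasing enumeration of the maxima of the
residue classes mod `p` in the `N`-bead beta-set of `gam`. -/
def IsRho (p N : ℕ) (gam : PartitionNat) (ρ : ℕ → ℕ) : Prop :=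
  (∀ i j, i < j → j < p → ρ i < ρ j) ∧
  (∀ i, i < p → ρ i ∈ betaSet N gam ∧ ∀ b ∈ betaSet N gam, b % p = ρ i % p → b ≤ ρ i) ∧
  (∀ r, r < p → ∃ i, i < p ∧ ρ i % p = r)

/-- The beta-set of the partition `⟨i,j⟩` (`i < j`). -/
def pairBeta (p : ℕ) (B : Finset ℕ) (ρ : ℕ → ℕ) (i j : ℕ) : Finset ℕ :=
  (B \ {ρ i, ρ j}) ∪ {ρ i + p, ρ j + p}

/-- The beta-set of the partition `⟨i⟩`. -/
def oneBeta (p : ℕ) (B : Finset ℕ) (ρ : ℕ → ℕ) (i : ℕ) : Finset ℕ :=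
  (B \ {ρ i}) ∪ {ρ i + 2 * p}

/-- The beta-set of the partition `⟨i²⟩`. -/
def sqBeta (p : ℕ) (B : Finset ℕ) (ρ : ℕ → ℕ) (i : ℕ) : Finset ℕ :=
  (B \ {ρ i - p}) ∪ {ρ i + p}

/-- The pyramid entry `γ_{ij}` of the block, extended by `1` for `i > j` and `0`
for `j ≥ p`. -/
def pyr (p : ℕ) (ρ : ℕ → ℕ) (i j : ℕ) : ℕ :=
  if j < i then 1 else if p ≤ j then 0 else if ρ j - ρ i < p then 1 else 0

/-- The beta-set of Fayers' partition `⌈i,j⌋` (for `0 ≤ i ≤ j ≤ p−1`, `i < p−1`),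
defined by cases on the pyramid entries. -/
def fayersBeta (p : ℕ) (B : Finset ℕ) (ρ : ℕ → ℕ) (i j : ℕ) : Finset ℕ :=
  if i = j then
    (if pyr p ρ (i + 1) (i + 2) = 1 then pairBeta p B ρ (i + 1) (i + 2)
     else oneBeta p B ρ (i + 1))
  else
    if pyr p ρ i (j + 1) = 1 then pairBeta p B ρ i (j + 1)
    else if pyr p ρ i j = 1 then oneBeta p B ρ i
    else if pyr p ρ (i + 1) j = 1 then sqBeta p B ρ j
    else pairBeta p B ρ (i + 1) j

/-- The set of `p`-BG-partitions in the block of weight `w` with core `gam`: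
self-conjugate partitions in the block none of whose diagonal hook lengths is
divisible by `p`. -/
def BGset (p w : ℕ) (gam : PartitionNat) : Set PartitionNat :=
  {lam | InBlock p w gam lam ∧ SelfConj lam ∧ ∀ i, lam.IsNode i i → ¬ p ∣ lam.hook i i}

namespace PartitionNat

variable {μ : PartitionNat} {N p b c x : ℕ}

theorem succ_le_part_iff_succ_le_conj (μ : PartitionNat) (i j : ℕ) :
    j + 1 ≤ μ.part i ↔ i + 1 ≤ μ.conj j := by
  have hfin : {k : ℕ | j + 1 ≤ μ.part k}.Finite :=
    μ.finite_support.subset fun k (hk : j + 1 ≤ μ.part k) => by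
      simp only [Function.mem_support]
      omega
  constructor
  · intro h
    have hsub : Set.Iic i ⊆ {k : ℕ | j + 1 ≤ μ.part k} := fun k hk => h.trans (μ.antitone hk)
    have := Set.ncard_le_ncard hsub hfin
    rwa [← Finset.coe_Iic, Set.ncard_coe_finset, Nat.card_Iic] at this
  · intro h
    by_contra hi
    have hsub : {k : ℕ | j + 1 ≤ μ.part k} ⊆ Set.Iio i := fun k hk => by
      by_contra hk'
      exact hi (le_trans hk (μ.antitone (not_lt.mp hk')))
    have := Set.ncard_le_ncard hsub (Set.finite_Iio i)
    rw [← Finset.coe_Iio, Set.ncard_coe_finset, Nat.card_Iio] at this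
    unfold conj at h
    omega

theorem conj_zero (μ : PartitionNat) : μ.conj 0 = μ.len := by
  unfold conj len
  congr 1
  ext k
  simp only [Set.mem_ofPred_eq, Function.mem_support]
  omega

theorem SelfConj.succ_le_part_comm (hsc : μ.SelfConj) (i j : ℕ) :
    j + 1 ≤ μ.part i ↔ i + 1 ≤ μ.part j := by
  rw [succ_le_part_iff_succ_le_conj, ← hsc j]

theorem SelfConj.part_le_len (hsc : μ.SelfConj) (i : ℕ) : μ.part i ≤ μ.len :=
  (μ.antitone (Nat.zero_le i)).trans_eq (by rw [hsc 0, conj_zero])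

theorem mem_betaSet : b ∈ betaSet N μ ↔ ∃ i < N, μ.part i + (N - 1 - i) = b := by
  simp [betaSet]

theorem card_betaSet : (betaSet N μ).card = N := by
  refine (Finset.card_image_of_injOn fun i hi k hk hik => ?_).trans (Finset.card_range N)
  simp only [Finset.coe_range, Set.mem_Iio] at hi hk
  rcases Nat.lt_trichotomy i k with h | h | h
  · have := μ.antitone h.le; omega
  · exact h
  · have := μ.antitone h.le; omega

theorem lt_of_mem_betaSet (h0 : μ.part 0 ≤ N) (hb : b ∈ betaSet N μ) : b < 2 * N := by
  obtain ⟨i, hi, rfl⟩ := mem_betaSet.mp hb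
  have := μ.antitone (Nat.zero_le i)
  omega

theorem mem_betaSet_of_lt_sub_len (hx : x < N - μ.len) : x ∈ betaSet N μ := by
  have hpart : μ.part (N - 1 - x) = 0 := by
    by_contra h
    have := (succ_le_part_iff_succ_le_conj μ (N - 1 - x) 0).mp (by omega)
    rw [conj_zero] at this
    omega
  exact mem_betaSet.mpr ⟨N - 1 - x, by omega, by omega⟩

namespace SelfConj

theorem lt_of_mem_betaSet (hsc : μ.SelfConj) (hlen : μ.len ≤ N)
    (hb : b ∈ betaSet N μ) : b < 2 * N :=
  PartitionNat.lt_of_mem_betaSet ((hsc.part_le_len 0).trans hlen) hb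

/-- Beads `λ_i + N - 1 - i` and `λ_k + N - 1 - k` at mirror positions would give
`λ_i + λ_k = i + k + 1`, which self-conjugacy forbids. -/
theorem reflect_not_mem_betaSet (hsc : μ.SelfConj) (hlen : μ.len ≤ N)
    (hb : b ∈ betaSet N μ) : 2 * N - 1 - b ∉ betaSet N μ := by
  intro hb'
  obtain ⟨i, hi, hib⟩ := mem_betaSet.mp hb
  obtain ⟨k, hk, hkb⟩ := mem_betaSet.mp hb'
  have := hsc.part_le_len i
  have := hsc.part_le_len k
  have := hsc.succ_le_part_comm i k
  omega

theorem reflect_mem_betaSet_iff (hsc : μ.SelfConj) (hlen : μ.len ≤ N)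
    (hx : x < 2 * N) :
    2 * N - 1 - x ∈ betaSet N μ ↔ x ∉ betaSet N μ := by
  refine ⟨fun h hx' => reflect_not_mem_betaSet hsc hlen hx' h, fun h => ?_⟩
  set B := betaSet N μ
  set R := B.image (2 * N - 1 - ·)
  have hdisj : Disjoint B R := Finset.disjoint_left.mpr fun a ha haR => by
    obtain ⟨b, hb, rfl⟩ := Finset.mem_image.mp haR
    have := lt_of_mem_betaSet hsc hlen hb
    exact reflect_not_mem_betaSet hsc hlen ha
      (by rwa [show 2 * N - 1 - (2 * N - 1 - b) = b by omega])
  have hsub : B ∪ R ⊆ Finset.range (2 * N) := Finset.union_subset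
    (fun a ha => Finset.mem_range.mpr (lt_of_mem_betaSet hsc hlen ha))
    (Finset.image_subset_iff.mpr fun a ha => by
      have := lt_of_mem_betaSet hsc hlen ha
      exact Finset.mem_range.mpr (by omega))
  have hRcard : R.card = N := by
    rw [Finset.card_image_of_injOn fun a ha b hb hab => ?_, card_betaSet]
    have := lt_of_mem_betaSet hsc hlen (Finset.mem_coe.mp ha)
    have := lt_of_mem_betaSet hsc hlen (Finset.mem_coe.mp hb)
    omega
  have hunion : B ∪ R = Finset.range (2 * N) :=
    Finset.eq_of_subset_of_card_le hsub (by
      rw [Finset.card_union_of_disjoint hdisj, hRcard, card_betaSet, Finset.card_range]; omega)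
  have hxR : x ∈ R := by
    have := hunion ▸ Finset.mem_range.mpr hx
    exact (Finset.mem_union.mp this).resolve_left h
  obtain ⟨b, hb, rfl⟩ := Finset.mem_image.mp hxR
  have := lt_of_mem_betaSet hsc hlen hb
  rwa [show 2 * N - 1 - (2 * N - 1 - b) = b by omega]

end SelfConj

/-- A gap at `b - p` below a bead `b` mirrors to a bead, and the two beads span a hook
of length `p`. -/
theorem IsCore.sub_mem_betaSet (hγ : IsCore p μ) (hsc : μ.SelfConj)
    (hlen : μ.len ≤ N) (hb : b ∈ betaSet N μ) (hpb : p ≤ b) :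
    b - p ∈ betaSet N μ := by
  by_contra hgap
  have hb2N := hsc.lt_of_mem_betaSet hlen hb
  obtain ⟨i, hi, hib⟩ := mem_betaSet.mp hb
  obtain ⟨k, hk, hkb⟩ := mem_betaSet.mp
    ((hsc.reflect_mem_betaSet_iff hlen (x := b - p) (by omega)).mpr hgap)
  have := hsc.part_le_len i
  have := hsc.part_le_len k
  have hnode : k < μ.part i := by
    have := hsc.succ_le_part_comm k i
    omega
  refine hγ i k hnode ⟨1, ?_⟩
  unfold hook
  rw [← hsc k]
  omega

theorem IsCore.sub_mul_mem_betaSet (hγ : IsCore p μ) (hsc : μ.SelfConj)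
    (hlen : μ.len ≤ N) (hb : b ∈ betaSet N μ) (k : ℕ) (hk : p * k ≤ b) :
    b - p * k ∈ betaSet N μ := by
  induction k with
  | zero => simpa
  | succ k ih =>
    rw [Nat.mul_succ] at hk ⊢
    rw [← Nat.sub_sub]
    exact hγ.sub_mem_betaSet hsc hlen (ih (by omega)) (by omega)

theorem IsCore.mem_betaSet_of_modEq (hγ : IsCore p μ) (hsc : μ.SelfConj)
    (hlen : μ.len ≤ N) (hb : b ∈ betaSet N μ) (hcb : c ≤ b)
    (hmod : c ≡ b [MOD p]) : c ∈ betaSet N μ := by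
  obtain ⟨k, hk⟩ := (Nat.modEq_iff_dvd' hcb).mp hmod
  rw [show c = b - p * k by omega]
  exact hγ.sub_mul_mem_betaSet hsc hlen hb k (by omega)

end PartitionNat

def IsRunnerMax (p : ℕ) (B : Finset ℕ) (m : ℕ) : Prop :=
  m ∈ B ∧ ∀ b ∈ B, b % p = m % p → b ≤ m

theorem IsRunnerMax.eq {p : ℕ} {B : Finset ℕ} {m m' : ℕ} (hm : IsRunnerMax p B m)
    (hm' : IsRunnerMax p B m') (h : m % p = m' % p) : m = m' :=
  le_antisymm (hm'.2 m hm.1 h) (hm.2 m' hm'.1 h.symm)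

/-- `m + p` is a gap, so its mirror image `m'` is a bead; a bead `b > m'` on the runner of
`m'` would mirror to a gap `2N - 1 - b ≤ m` on the runner of `m`. -/
theorem PartitionNat.IsCore.exists_isRunnerMax_mirror {p N m : ℕ} {μ : PartitionNat}
    (hγ : IsCore p μ) (hsc : μ.SelfConj) (hp : 0 < p) (hlen : μ.len + p ≤ N)
    (hm : IsRunnerMax p (betaSet N μ) m) :
    ∃ m', IsRunnerMax p (betaSet N μ) m' ∧ m + m' + p + 1 = 2 * N := by
  have hlen' : μ.len ≤ N := by omega
  have hm2N : m + p < 2 * N := by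
    by_contra h
    exact hsc.reflect_not_mem_betaSet hlen' hm.1 (mem_betaSet_of_lt_sub_len (by omega))
  have hgap : m + p ∉ betaSet N μ := fun h => by
    have := hm.2 _ h (Nat.add_mod_right m p)
    omega
  refine ⟨2 * N - 1 - (m + p), ⟨(hsc.reflect_mem_betaSet_iff hlen' hm2N).mpr hgap,
    fun b hb hmod => ?_⟩, by omega⟩
  by_contra hbm
  have hb2N := hsc.lt_of_mem_betaSet hlen' hb
  obtain ⟨_ | k, hk⟩ := (Nat.modEq_iff_dvd' (le_of_not_ge hbm)).mp hmod.symm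
  · omega
  rw [Nat.mul_succ] at hk
  have hmirror : 2 * N - 1 - b ∈ betaSet N μ :=
    hγ.mem_betaSet_of_modEq hsc hlen' hm.1 (by omega)
      ((Nat.modEq_iff_dvd' (by omega)).mpr ⟨k, by omega⟩)
  exact hsc.reflect_not_mem_betaSet hlen' hb hmirror

theorem mod_add_mod_eq_sub_one {p a b : ℕ} (hp : 0 < p) (h : p ∣ a + b + 1) :
    a % p + b % p = p - 1 := by
  have hdvd : p ∣ a % p + b % p + 1 := by
    have e : a + b + 1 = a % p + b % p + 1 + p * (a / p + b / p) := by
      rw [mul_add]; linarith [Nat.div_add_mod a p, Nat.div_add_mod b p]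
    rwa [e, Nat.dvd_add_left (dvd_mul_right _ _)] at h
  have := Nat.eq_of_dvd_of_lt_two_mul (by omega) hdvd
    (by have := Nat.mod_lt a hp; have := Nat.mod_lt b hp; omega)
  omega

theorem StrictMono.add_apply_rev_eq {n K : ℕ} {ρ : Fin n → ℕ} (hρ : StrictMono ρ)
    (hpair : ∀ i, ∃ j, ρ i + ρ j = K) (i : Fin n) : ρ i + ρ i.rev = K := by
  choose f hf using hpair
  have hanti : StrictAnti f := fun i j hij => by
    have := hρ hij
    have := hf i
    have := hf j
    exact hρ.lt_iff_lt.mp (by omega)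
  have hf_rev : f i = i.rev := by
    rw [← Fin.rev_rev (f i)]
    exact congrArg Fin.rev (congrFun (Fin.rev_strictAnti.comp hanti).eq_id i)
  rw [← hf_rev, hf]

theorem IsRho.add_mirror_eq {p N : ℕ} {μ : PartitionNat} {ρ : ℕ → ℕ} (hρ : IsRho p N μ ρ)
    (hγ : IsCore p μ) (hsc : μ.SelfConj) (hlen : μ.len + p ≤ N) {i : ℕ} (hi : i < p) :
    ρ i + ρ (p - 1 - i) + p + 1 = 2 * N := by
  obtain ⟨hmono, hmax, hsurj⟩ := hρ
  have hp : 0 < p := by omega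
  let ρ' : Fin p → ℕ := fun i => ρ i
  have hpair : ∀ i, ∃ j, ρ' i + ρ' j = 2 * N - 1 - p := fun i => by
    obtain ⟨m', hm', hsum⟩ := hγ.exists_isRunnerMax_mirror hsc hp hlen (hmax i i.2)
    obtain ⟨j, hj, hjm⟩ := hsurj (m' % p) (Nat.mod_lt _ hp)
    refine ⟨⟨j, hj⟩, ?_⟩
    show ρ i + ρ j = _
    rw [IsRunnerMax.eq (hmax j hj) hm' hjm]
    omega
  have := StrictMono.add_apply_rev_eq (fun i j hij => hmono i j hij j.2) hpair ⟨i, hi⟩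
  simp only [Fin.val_rev] at this
  rw [show p - (i + 1) = p - 1 - i by omega] at this
  omega

theorem stmt6_general (p : ℕ) (hp : p.Prime)
    (γ : PartitionNat) (hγ : IsCore p γ) (hsc : SelfConj γ)
    (N : ℕ) (hN : p ∣ N) (hNlen : γ.len + 2 * p ≤ N)
    (ρ : ℕ → ℕ) (hρ : IsRho p N γ ρ) :
    ∀ i, i ≤ p - 1 → ρ i % p + ρ (p - 1 - i) % p = p - 1 := by
  intro i hi
  have hsum := hρ.add_mirror_eq hγ hsc (by omega) (i := i) (by have := hp.pos; omega)
  refine mod_add_mod_eq_sub_one hp.pos ?_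
  rw [show ρ i + ρ (p - 1 - i) + 1 = 2 * N - p by omega]
  exact Nat.dvd_sub (hN.mul_left 2) dvd_rfl

/-- for a self-conjugate `p`-core, the residues of the sorted
lowest-bead positions satisfy `(ρ_i mod p) + (ρ_{p−1−i} mod p) = p − 1`. -/
theorem stmt6 (p : ℕ) (hp : p.Prime) (hodd : Odd p)
    (γ : PartitionNat) (hγ : IsCore p γ) (hsc : SelfConj γ)
    (N : ℕ) (hN : p ∣ N) (hNlen : γ.len + 2 * p ≤ N)
    (ρ : ℕ → ℕ) (hρ : IsRho p N γ ρ) :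
    ∀ i, i ≤ p - 1 → ρ i % p + ρ (p - 1 - i) % p = p - 1 :=
  stmt6_general p hp γ hγ hsc N hN hNlen ρ hρ

end ArxivW2
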